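/- Let n ≥ 1 and let k_1,…,k_n be integers with k_i ≥ 2 for every i, and suppose at least one k_i ≥ 3. Let C = T(k_1,…,k_n) be the integer tridiagonal matrix with diagonal entries k_i and off-diagonal entries −1 on the sub- and super-diagonal. Then the cokernel ℤ^n / Cℤ^n is a finite cyclic group whose order equals Σ_{μ ∈ M(P_n)} (−1)^{|μ|} Π_{v ∉ V(μ)} k_v, the sum being over all matchings of the path graph P_n. (This is the sandpile group of the polygon chain PC_n whose stack of polygons have k_1,…,k_n sides, and the order is its number of spanning trees τ(PC_n).) -/

import Mathlib

/-- `tridiag x n` is the `n × n` tridiagonal matrix `T(x_1, …, x_n)` whose `(i,i)`-entry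
is `x (i+1)` (so the diagonal reads `x 1, …, x n`), whose `(i,j)`-entry is `-1` when
`|i - j| = 1`, and whose other entries are `0`; equivalently `diag(x) - A(P_n)` for the
path graph `P_n`. -/
def tridiag {R : Type*} [CommRing R] (x : ℕ → R) (n : ℕ) :
    Matrix (Fin n) (Fin n) R :=
  Matrix.of fun i j =>
    if (i : ℕ) = j then x ((i : ℕ) + 1)
    else if (i : ℕ) + 1 = j ∨ (j : ℕ) + 1 = i then -1 else 0

/-- The matchings of the path graph `P_n` on vertices `0, …, n-1`: a matching is
encoded by the set `μ` of indices `i < n - 1` of its edges `{i, i+1}`, no two of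
which may be consecutive. -/
def pathMatchings (n : ℕ) : Finset (Finset ℕ) :=
  (Finset.range (n - 1)).powerset.filter (fun μ => ∀ i ∈ μ, i + 1 ∉ μ)

/-- The set of vertices of `P_n` covered by a matching `μ` (the edge with index `i`
covers vertices `i` and `i + 1`). -/
def coveredVertices (μ : Finset ℕ) : Finset ℕ :=
  μ ∪ μ.image (· + 1)

/-!
The cokernel is generated by the class of `e₀`: the column `C eⱼ = kⱼ₊₁ eⱼ - eⱼ₋₁ - eⱼ₊₁`
expresses `eⱼ₊₁` through `eⱼ` and `eⱼ₋₁` modulo the image of `C`. Since `C` is nonsingular, the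
order of the cokernel is `|det C|` (Smith normal form). Expanding along the last row, and
splitting matchings according to whether they use the last edge, shows that `det T(k₁, …, kₙ)`
and the matching sum satisfy the same continuant recurrence `Dₙ₊₂ = kₙ₊₂ Dₙ₊₁ - Dₙ`. When all
`kᵢ ≥ 2`, this recurrence keeps `Dₘ` positive and increasing.
-/

open Finset Matrix

section Determinant

variable {R : Type*} [CommRing R]

theorem Matrix.det_succ_of_last_row_eq_zero {m : ℕ} (M : Matrix (Fin (m + 1)) (Fin (m + 1)) R)
    (h : ∀ j : Fin m, M (Fin.last m) j.castSucc = 0) :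
    M.det = M (Fin.last m) (Fin.last m) * (M.submatrix Fin.castSucc Fin.castSucc).det := by
  rw [det_succ_row M (Fin.last m), Fin.sum_univ_castSucc, sum_eq_zero fun j _ => by simp [h]]
  simp [Fin.succAbove_last, Even.neg_one_pow ⟨m, rfl⟩]

theorem Matrix.det_succ_of_last_col_eq_zero {m : ℕ} (M : Matrix (Fin (m + 1)) (Fin (m + 1)) R)
    (h : ∀ i : Fin m, M i.castSucc (Fin.last m) = 0) :
    M.det = M (Fin.last m) (Fin.last m) * (M.submatrix Fin.castSucc Fin.castSucc).det := by
  rw [← det_transpose, det_succ_of_last_row_eq_zero Mᵀ h, ← transpose_submatrix, det_transpose,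
    transpose_apply]

@[simp]
theorem tridiag_apply (x : ℕ → R) (n : ℕ) (i j : Fin n) :
    tridiag x n i j =
      if (i : ℕ) = j then x ((i : ℕ) + 1)
      else if (i : ℕ) + 1 = j ∨ (j : ℕ) + 1 = i then -1 else 0 := rfl

theorem tridiag_submatrix_castSucc (x : ℕ → R) (n : ℕ) :
    (tridiag x (n + 1)).submatrix Fin.castSucc Fin.castSucc = tridiag x n := by
  ext i j
  simp

theorem det_tridiag_zero (x : ℕ → R) : (tridiag x 0).det = 1 :=
  det_fin_zero

theorem det_tridiag_one (x : ℕ → R) : (tridiag x 1).det = x 1 := by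
  simp

theorem det_tridiag_succ_succ (x : ℕ → R) (n : ℕ) :
    (tridiag x (n + 2)).det = x (n + 2) * (tridiag x (n + 1)).det - (tridiag x n).det := by
  -- the minor of the entry `(n + 1, n)`; its last column is `-eₙ`
  set B := (tridiag x (n + 2)).submatrix (Fin.last (n + 1)).succAbove
    (Fin.last n).castSucc.succAbove
  have hB : B.det = -(tridiag x n).det := by
    have hminor : B.submatrix Fin.castSucc Fin.castSucc = tridiag x n := by
      ext i j
      simp [B]
    have hlast (i : Fin n) : B i.castSucc (Fin.last n) = 0 := by
      simp only [B, submatrix_apply, Fin.succAbove_last,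
        Fin.succAbove_ne_last_last (Fin.castSucc_ne_last _), tridiag_apply]
      grind
    rw [det_succ_of_last_col_eq_zero B hlast, hminor]
    simp [B]
  rw [det_succ_row _ (Fin.last (n + 1)), Fin.sum_univ_castSucc, Fin.sum_univ_castSucc,
    sum_eq_zero fun j _ => by simp only [tridiag_apply]; grind, hB]
  have hodd : (-1 : R) ^ (n + 1 + n) = -1 := Odd.neg_one_pow ⟨n, by ring⟩
  have heven : (-1 : R) ^ (n + 1 + (n + 1)) = 1 := Even.neg_one_pow ⟨n + 1, rfl⟩
  rw [Fin.succAbove_last, tridiag_submatrix_castSucc]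
  simp only [Fin.val_last, Fin.val_castSucc, tridiag_apply, hodd, heven]
  grind

end Determinant

section Matchings

theorem mem_pathMatchings {n : ℕ} {μ : Finset ℕ} :
    μ ∈ pathMatchings n ↔ (∀ i ∈ μ, i + 1 < n) ∧ ∀ i ∈ μ, i + 1 ∉ μ := by
  simp only [pathMatchings, mem_filter, mem_powerset, subset_iff, mem_range]
  grind

theorem mem_coveredVertices {μ : Finset ℕ} {v : ℕ} :
    v ∈ coveredVertices μ ↔ v ∈ μ ∨ ∃ i ∈ μ, i + 1 = v := by
  simp [coveredVertices]

theorem coveredVertices_insert (i : ℕ) (μ : Finset ℕ) :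
    coveredVertices (insert i μ) = insert i (insert (i + 1) (coveredVertices μ)) := by
  ext v
  simp only [mem_coveredVertices, mem_insert]
  grind

theorem pathMatchings_zero : pathMatchings 0 = {∅} := rfl

theorem pathMatchings_one : pathMatchings 1 = {∅} := rfl

theorem filter_notMem_pathMatchings_succ_succ (n : ℕ) :
    (pathMatchings (n + 2)).filter (n ∉ ·) = pathMatchings (n + 1) := by
  ext μ
  simp only [mem_filter, mem_pathMatchings]
  grind

theorem filter_mem_pathMatchings_succ_succ (n : ℕ) :
    (pathMatchings (n + 2)).filter (n ∈ ·) = (pathMatchings n).image (insert n) := by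
  ext μ
  simp only [mem_filter, mem_image, mem_pathMatchings]
  constructor
  · rintro ⟨⟨hlt, hsep⟩, hn⟩
    refine ⟨μ.erase n, ⟨?_, ?_⟩, insert_erase hn⟩ <;> simp only [mem_erase] <;> grind
  · rintro ⟨ν, ⟨hlt, hsep⟩, rfl⟩
    simp only [mem_insert]
    grind

variable {R : Type*} [CommRing R]

def pathMatchingSum (x : ℕ → R) (n : ℕ) : R :=
  ∑ μ ∈ pathMatchings n, (-1) ^ μ.card * ∏ v ∈ range n \ coveredVertices μ, x (v + 1)

theorem pathMatchingSum_zero (x : ℕ → R) : pathMatchingSum x 0 = 1 := by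
  simp [pathMatchingSum, pathMatchings_zero]

theorem pathMatchingSum_one (x : ℕ → R) : pathMatchingSum x 1 = x 1 := by
  simp [pathMatchingSum, pathMatchings_one, coveredVertices]

theorem pathMatchingSum_succ_succ (x : ℕ → R) (n : ℕ) :
    pathMatchingSum x (n + 2) = x (n + 2) * pathMatchingSum x (n + 1) - pathMatchingSum x n := by
  rw [pathMatchingSum, ← sum_filter_not_add_sum_filter _ (n ∈ ·),
    filter_notMem_pathMatchings_succ_succ, filter_mem_pathMatchings_succ_succ, sum_image ?inj,
    pathMatchingSum, pathMatchingSum, mul_sum, sub_eq_add_neg, ← sum_neg_distrib]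
  case inj =>
    intro μ hμ ν hν h
    rw [mem_coe, mem_pathMatchings] at hμ hν
    rw [← erase_insert (show n ∉ μ by grind), h, erase_insert (show n ∉ ν by grind)]
  congr 1
  · refine sum_congr rfl fun μ hμ => ?_
    have hrange : range (n + 2) \ coveredVertices μ =
        insert (n + 1) (range (n + 1) \ coveredVertices μ) := by
      ext v
      simp only [mem_sdiff, mem_insert, mem_range, mem_coveredVertices]
      rw [mem_pathMatchings] at hμ
      grind
    rw [hrange, prod_insert (by simp)]
    ring
  · refine sum_congr rfl fun μ hμ => ?_
    rw [mem_pathMatchings] at hμ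
    have hrange : range (n + 2) \ coveredVertices (insert n μ) = range n \ coveredVertices μ := by
      ext v
      simp only [mem_sdiff, mem_insert, mem_range, coveredVertices_insert]
      grind
    rw [hrange, card_insert_of_notMem (by grind), pow_succ]
    ring

end Matchings

theorem det_tridiag_eq_pathMatchingSum {R : Type*} [CommRing R] (x : ℕ → R) (n : ℕ) :
    (tridiag x n).det = pathMatchingSum x n := by
  induction n using Nat.twoStepInduction with
  | zero => rw [det_tridiag_zero, pathMatchingSum_zero]
  | one => rw [det_tridiag_one, pathMatchingSum_one]
  | more n ih₀ ih₁ => rw [det_tridiag_succ_succ, pathMatchingSum_succ_succ, ih₀, ih₁]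

theorem one_le_det_tridiag {k : ℕ → ℤ} {n : ℕ} (hk : ∀ i, 1 ≤ i → i ≤ n → 2 ≤ k i) :
    1 ≤ (tridiag k n).det := by
  have key : ∀ m, m + 1 ≤ n →
      1 ≤ (tridiag k m).det ∧ (tridiag k m).det < (tridiag k (m + 1)).det := by
    intro m
    induction m with
    | zero =>
      intro h
      have := hk 1 le_rfl h
      rw [det_tridiag_zero, det_tridiag_one]
      omega
    | succ m ih =>
      intro h
      obtain ⟨h₀, h₁⟩ := ih (by omega)
      have := hk (m + 2) (by omega) h
      rw [det_tridiag_succ_succ]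
      constructor <;> nlinarith
  rcases n with _ | m
  · exact (det_tridiag_zero k).ge
  · exact (key m le_rfl).1.trans (key m le_rfl).2.le

theorem Matrix.natCard_quotient_range_mulVecLin {ι : Type*} [Fintype ι] [DecidableEq ι]
    (M : Matrix ι ι ℤ) (hM : M.det ≠ 0) :
    Nat.card ((ι → ℤ) ⧸ LinearMap.range M.mulVecLin) = M.det.natAbs := by
  let e := LinearEquiv.ofInjective M.mulVecLin (mulVec_injective_of_det_ne_zero hM)
  rw [← Submodule.natAbs_det_equiv _ e, ← LinearMap.det_toLin']
  rfl

theorem isAddCyclic_quotient_of_span_sup_eq_top {M : Type*} [AddCommGroup M]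
    {N : Submodule ℤ M} {x : M} (h : Submodule.span ℤ {x} ⊔ N = ⊤) : IsAddCyclic (M ⧸ N) := by
  have hspan : Submodule.span ℤ {N.mkQ x} = ⊤ := by
    rw [← Set.image_singleton, ← Submodule.map_span, Submodule.map_mkQ_eq_top, sup_comm, h]
  exact ⟨N.mkQ x, fun y => Submodule.mem_span_singleton.mp (hspan ▸ Submodule.mem_top)⟩

section Cyclic

variable {R : Type*} [CommRing R]

-- the `m`-th standard basis vector, which is `0` when `n ≤ m`
def stdVec (R : Type*) [Zero R] [One R] (n m : ℕ) : Fin n → R :=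
  fun i => if (i : ℕ) = m then 1 else 0

theorem stdVec_of_lt {n m : ℕ} (hm : m < n) : stdVec R n m = Pi.single ⟨m, hm⟩ 1 := by
  ext i
  simp [stdVec, Pi.single_apply, Fin.ext_iff]

theorem stdVec_of_le {n m : ℕ} (hm : n ≤ m) : stdVec R n m = 0 := by
  ext i
  simp only [stdVec, Pi.zero_apply]
  grind

theorem tridiag_mulVec_stdVec_zero (x : ℕ → R) {n : ℕ} (hn : 0 < n) :
    tridiag x n *ᵥ stdVec R n 0 = x 1 • stdVec R n 0 - stdVec R n 1 := by
  rw [stdVec_of_lt hn, mulVec_single_one]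
  ext i
  simp only [col_apply, tridiag_apply, Pi.sub_apply, Pi.smul_apply, Pi.single_apply, Fin.ext_iff,
    smul_eq_mul, stdVec]
  grind

theorem tridiag_mulVec_stdVec_succ (x : ℕ → R) {n m : ℕ} (hm : m + 1 < n) :
    tridiag x n *ᵥ stdVec R n (m + 1) =
      x (m + 2) • stdVec R n (m + 1) - stdVec R n m - stdVec R n (m + 2) := by
  rw [stdVec_of_lt hm, mulVec_single_one]
  ext i
  simp only [col_apply, tridiag_apply, Pi.sub_apply, Pi.smul_apply, Pi.single_apply, Fin.ext_iff,
    smul_eq_mul, stdVec]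
  grind

theorem span_stdVec_zero_sup_range_tridiag (x : ℕ → R) (n : ℕ) :
    Submodule.span R {stdVec R n 0} ⊔ LinearMap.range (tridiag x n).mulVecLin = ⊤ := by
  set G := Submodule.span R {stdVec R n 0} ⊔ LinearMap.range (tridiag x n).mulVecLin
  have hcol (m : ℕ) : tridiag x n *ᵥ stdVec R n m ∈ G :=
    Submodule.mem_sup_right (LinearMap.mem_range_self (tridiag x n).mulVecLin _)
  have key (m : ℕ) : stdVec R n m ∈ G ∧ stdVec R n (m + 1) ∈ G := by
    induction m with
    | zero =>
      have h₀ : stdVec R n 0 ∈ G := Submodule.mem_sup_left (Submodule.mem_span_singleton_self _)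
      refine ⟨h₀, ?_⟩
      rcases lt_or_ge 0 n with hn | hn
      · have : stdVec R n 1 = x 1 • stdVec R n 0 - tridiag x n *ᵥ stdVec R n 0 := by
          rw [tridiag_mulVec_stdVec_zero x hn]; abel
        rw [this]
        exact G.sub_mem (G.smul_mem _ h₀) (hcol 0)
      · rw [stdVec_of_le (by omega)]
        exact G.zero_mem
    | succ m ih =>
      refine ⟨ih.2, ?_⟩
      rcases lt_or_ge (m + 1) n with hm | hm
      · have : stdVec R n (m + 2) =
            x (m + 2) • stdVec R n (m + 1) - stdVec R n m - tridiag x n *ᵥ stdVec R n (m + 1) := by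
          rw [tridiag_mulVec_stdVec_succ x hm]; abel
        rw [this]
        exact G.sub_mem (G.sub_mem (G.smul_mem _ ih.2) ih.1) (hcol (m + 1))
      · rw [stdVec_of_le (by omega)]
        exact G.zero_mem
  refine eq_top_iff.mpr fun v _ => ?_
  rw [pi_eq_sum_univ v]
  refine G.sum_mem fun i _ => G.smul_mem _ ?_
  convert (key i).1 using 1
  ext j
  simp [stdVec, Fin.ext_iff, eq_comm]

end Cyclic

theorem polygonChain_sandpile_cyclic_general (n : ℕ) (k : ℕ → ℤ)
    (h2 : ∀ i, 1 ≤ i → i ≤ n → 2 ≤ k i) :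
    Finite ((Fin n → ℤ) ⧸ LinearMap.range (tridiag k n).mulVecLin) ∧
    IsAddCyclic ((Fin n → ℤ) ⧸ LinearMap.range (tridiag k n).mulVecLin) ∧
    (Nat.card ((Fin n → ℤ) ⧸ LinearMap.range (tridiag k n).mulVecLin) : ℤ) =
      ∑ μ ∈ pathMatchings n, (-1 : ℤ) ^ μ.card *
        ∏ v ∈ Finset.range n \ coveredVertices μ, k (v + 1) := by
  have hdet : 1 ≤ (tridiag k n).det := one_le_det_tridiag h2
  have hcard := (tridiag k n).natCard_quotient_range_mulVecLin (by omega)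
  refine ⟨Nat.finite_of_card_ne_zero (by omega),
    isAddCyclic_quotient_of_span_sup_eq_top (span_stdVec_zero_sup_range_tridiag k n), ?_⟩
  rw [hcard, Int.natAbs_of_nonneg (by omega), det_tridiag_eq_pathMatchingSum]
  rfl

/-- If `k_1, …, k_n` are integers with every `k_i ≥ 2` and some `k_i ≥ 3`, then the
cokernel `ℤⁿ / T(k_1, …, k_n) ℤⁿ` of the tridiagonal matrix `C = T(k_1, …, k_n)` is a
finite cyclic group whose order equals
`Σ_{μ ∈ M(P_n)} (-1)^{|μ|} Π_{v ∉ V(μ)} k_v`, the sum being over all matchings of the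
path graph `P_n`. (This is the sandpile group of the polygon chain `PC_n` whose stack
of polygons have `k_1, …, k_n` sides, and the order is `τ(PC_n)`.) -/
theorem polygonChain_sandpile_cyclic (n : ℕ) (hn : 1 ≤ n) (k : ℕ → ℤ)
    (h2 : ∀ i, 1 ≤ i → i ≤ n → 2 ≤ k i)
    (h3 : ∃ i, 1 ≤ i ∧ i ≤ n ∧ 3 ≤ k i) :
    Finite ((Fin n → ℤ) ⧸ LinearMap.range (tridiag k n).mulVecLin) ∧
    IsAddCyclic ((Fin n → ℤ) ⧸ LinearMap.range (tridiag k n).mulVecLin) ∧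
    (Nat.card ((Fin n → ℤ) ⧸ LinearMap.range (tridiag k n).mulVecLin) : ℤ) =
      ∑ μ ∈ pathMatchings n, (-1 : ℤ) ^ μ.card *
        ∏ v ∈ Finset.range n \ coveredVertices μ, k (v + 1) :=
  polygonChain_sandpile_cyclic_general n k h2
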